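/- The Neumann form Q^{(N)}, defined as the restriction of Q̃ to D(Q^{(N)}) = D̃ ∩ ℓ²(V,m), is a Dirichlet form on ℓ²(V,m): it is a nonnegative, closed, symmetric bilinear form with dense domain satisfying the Markov property Q^{(N)}(C∘u) ≤ Q^{(N)}(u) for every normal contraction C. -/

import Mathlib

open scoped ENNReal NNReal BigOperators
open MeasureTheory Filter

/-- A weighted graph `(b,c)` over a vertex set `V`. -/
structure WeightedGraph (V : Type*) where
  b : V → V → ℝ
  c : V → ℝ
  b_nonneg : ∀ x y, 0 ≤ b x y
  b_diag : ∀ x, b x x = 0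
  b_symm : ∀ x y, b x y = b y x
  b_summable : ∀ x, Summable fun y => b x y
  c_nonneg : ∀ x, 0 ≤ c x

/-- Membership in `ℓ²(V,m)`. -/
def MemL2 {V : Type*} (m : V → ℝ) (u : V → ℝ) : Prop :=
  Summable fun x => u x ^ 2 * m x

/-- The inner product of `ℓ²(V,m)`. -/
noncomputable def l2inner {V : Type*} (m : V → ℝ) (u v : V → ℝ) : ℝ :=
  ∑' x, u x * v x * m x

namespace WeightedGraph

variable {V : Type*} (G : WeightedGraph V)

/-- The energy functional `Q̃` with values in `[0,∞]`. -/
noncomputable def energy (u : V → ℝ) : ℝ≥0∞ :=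
  (1 / 2) * ∑' p : V × V, ENNReal.ofReal (G.b p.1 p.2 * (u p.1 - u p.2) ^ 2)
    + ∑' x, ENNReal.ofReal (G.c x * u x ^ 2)

/-- The functions of finite energy (`D̃`). -/
def FiniteEnergy (u : V → ℝ) : Prop := G.energy u < ⊤

/-- The real-valued bilinear energy form (meaningful on functions of finite energy). -/
noncomputable def energyBilin (u v : V → ℝ) : ℝ :=
  (1 / 2) * ∑' p : V × V, G.b p.1 p.2 * (u p.1 - u p.2) * (v p.1 - v p.2)
    + ∑' x, G.c x * u x * v x

/-- The generalized vertex degree. -/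
noncomputable def deg (x : V) : ℝ := (∑' y, G.b x y) + G.c x

/-- The formal Laplacian `L̃` associated with `(b,c)` and the measure `m`. -/
noncomputable def formalL (m : V → ℝ) (u : V → ℝ) (x : V) : ℝ :=
  ((∑' y, G.b x y * (u x - u y)) + G.c x * u x) / m x

/-- Connectedness of the weighted graph: any two vertices are joined by a path of edges. -/
def Connected : Prop :=
  ∀ x y : V, ∃ (n : ℕ) (p : ℕ → V), p 0 = x ∧ p n = y ∧ ∀ i < n, 0 < G.b (p i) (p (i + 1))

/-- The squared distance of the Yamasaki space with base point `o`. -/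
noncomputable def ydistSq (o : V) (u v : V → ℝ) : ℝ :=
  (G.energy (fun x => u x - v x)).toReal + (u o - v o) ^ 2

/-- The domain of the regular Dirichlet form `Q^(D)`: the closure of the finitely
supported functions in `D̃ ∩ ℓ²(V,m)` with respect to the form norm. -/
def regDom (m : V → ℝ) : Set (V → ℝ) :=
  {u | G.FiniteEnergy u ∧ MemL2 m u ∧
    ∃ f : ℕ → V → ℝ, (∀ n, (Function.support (f n)).Finite) ∧
      Filter.Tendsto
        (fun n => (G.energy (fun x => u x - f n x)).toReal + ∑' x, (u x - f n x) ^ 2 * m x)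
        Filter.atTop (nhds 0)}

/-- Transience of a Dirichlet form given by its domain: existence of a strictly positive
reference function `g ∈ ℓ¹(V,m) ∩ ℓ^∞(V)` with `⟨|u|,g⟩ ≤ Q(u)^{1/2}` on the domain. -/
def FormTransient (m : V → ℝ) (dom : Set (V → ℝ)) : Prop :=
  ∃ g : V → ℝ, (∀ x, 0 < g x) ∧ (Summable fun x => g x * m x) ∧ (∃ C, ∀ x, g x ≤ C) ∧
    ∀ u ∈ dom, ∑' x, |u x| * g x * m x ≤ Real.sqrt (G.energyBilin u u)

end WeightedGraph

/-- The data of a Dirichlet form `Q` associated with a weighted graph `(b,c)` on `ℓ²(V,m)`,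
together with its semigroup `T t = e^{-tL}` and resolvent `R α = (L+α)^{-1}`, with the
standard properties: `Q` is a restriction of `Q̃` with `D(Q^(D)) ⊆ D(Q) ⊆ D(Q^(N))`,
the semigroup is symmetric, Markovian, positivity preserving, the resolvent is characterized
by the form, and the resolvent is the Laplace transform of the semigroup. -/
structure FormSetup {V : Type*} (G : WeightedGraph V) (m : V → ℝ) where
  dom : Set (V → ℝ)
  dom_fe : ∀ u ∈ dom, G.FiniteEnergy u
  dom_l2 : ∀ u ∈ dom, MemL2 m u
  reg_sub : G.regDom m ⊆ dom
  T : ℝ → (V → ℝ) → V → ℝ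
  R : ℝ → (V → ℝ) → V → ℝ
  T_linear : ∀ t, IsLinearMap ℝ (T t)
  R_linear : ∀ α, IsLinearMap ℝ (R α)
  T_semigroup : ∀ s t : ℝ, 0 < s → 0 < t → ∀ f, T (s + t) f = T s (T t f)
  T_l2 : ∀ t : ℝ, 0 < t → ∀ f, MemL2 m f → MemL2 m (T t f)
  T_symm : ∀ t : ℝ, 0 < t → ∀ f g, MemL2 m f → MemL2 m g →
    l2inner m (T t f) g = l2inner m f (T t g)
  T_contraction : ∀ t : ℝ, 0 < t → ∀ f, MemL2 m f →
    ∑' x, T t f x ^ 2 * m x ≤ ∑' x, f x ^ 2 * m x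
  T_pos : ∀ t : ℝ, 0 < t → ∀ f, (∀ x, 0 ≤ f x) → ∀ x, 0 ≤ T t f x
  T_markov : ∀ t : ℝ, 0 < t → ∀ f, (∀ x, 0 ≤ f x ∧ f x ≤ 1) →
    ∀ x, 0 ≤ T t f x ∧ T t f x ≤ 1
  T_cont : ∀ f, MemL2 m f → ∀ x, ContinuousOn (fun t => T t f x) (Set.Ioi (0 : ℝ))
  R_mem : ∀ α : ℝ, 0 < α → ∀ f, MemL2 m f → R α f ∈ dom
  R_pos : ∀ α : ℝ, 0 < α → ∀ f, (∀ x, 0 ≤ f x) → ∀ x, 0 ≤ R α f x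
  R_char : ∀ α : ℝ, 0 < α → ∀ f, MemL2 m f → ∀ v ∈ dom,
    G.energyBilin (R α f) v + α * l2inner m (R α f) v = l2inner m f v
  R_laplace : ∀ α : ℝ, 0 < α → ∀ f, MemL2 m f → (∀ x, 0 ≤ f x) → ∀ y,
    ENNReal.ofReal (R α f y) =
      ∫⁻ t in Set.Ioi (0 : ℝ), ENNReal.ofReal (Real.exp (-α * t) * T t f y)

namespace FormSetup

variable {V : Type*} {G : WeightedGraph V} {m : V → ℝ}

open scoped Classical in
/-- The Green function `G(x,y) = ∫₀^∞ (e^{-tL} δ_x)(y) dt`, with values in `[0,∞]`. -/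
noncomputable def green (S : FormSetup G m) (x y : V) : ℝ≥0∞ :=
  ∫⁻ t in Set.Ioi (0 : ℝ), ENNReal.ofReal (S.T t (fun z => if z = x then 1 else 0) y)

/-- The extended Dirichlet space `D(Q)_e`: functions which are pointwise limits of
`Q`-Cauchy sequences from `D(Q)`. -/
def extDom (S : FormSetup G m) : Set (V → ℝ) :=
  {u | ∃ f : ℕ → V → ℝ, (∀ n, f n ∈ S.dom) ∧
    (∀ ε > (0 : ℝ), ∃ N, ∀ p ≥ N, ∀ q ≥ N,
      G.energyBilin (fun x => f p x - f q x) (fun x => f p x - f q x) < ε) ∧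
    ∀ x, Filter.Tendsto (fun n => f n x) Filter.atTop (nhds (u x))}

/-- Stochastic completeness: the resolvent `(L+1)^{-1}`, extended to `ℓ^∞(V)` by monotone
limits, maps the constant function `1` to `1`. -/
def StochComplete (S : FormSetup G m) : Prop :=
  ∀ f : ℕ → V → ℝ, (∀ n, MemL2 m (f n)) →
    (∀ n x, 0 ≤ f n x ∧ f n x ≤ f (n + 1) x ∧ f n x ≤ 1) →
    (∀ x, Filter.Tendsto (fun n => f n x) Filter.atTop (nhds 1)) →
    ∀ x, Filter.Tendsto (fun n => S.R 1 (f n) x) Filter.atTop (nhds 1)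

end FormSetup

open Topology

/-! The squared form norm `Q̃(u) + ‖u‖²` is a sum of nonnegative terms, each continuous for
pointwise convergence, hence it is lower semicontinuous in the product topology. A form-Cauchy
sequence `fₙ` is pointwise Cauchy because `m > 0`; by lower semicontinuity its pointwise limit `u`
satisfies `Q̃(fₙ - u) + ‖fₙ - u‖² ≤ ε` for large `n`, which gives closedness. Density follows from
`Q̃(u) ≤ 2 ∑ₓ deg(x) u(x)²`, so finitely supported truncations lie in the domain. The Markov
property holds term by term, since `|C a - C b| ≤ |a - b|` and `|C a| ≤ |a|`. -/

section WeightedSqSum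

variable {ι : Type*} {w : ι → ℝ}

noncomputable def weightedSqSum (w g : ι → ℝ) : ℝ≥0∞ :=
  ∑' i, ENNReal.ofReal (w i * g i ^ 2)

theorem weightedSqSum_ne_top_iff (hw : ∀ i, 0 ≤ w i) {g : ι → ℝ} :
    weightedSqSum w g ≠ ⊤ ↔ Summable fun i => w i * g i ^ 2 := by
  have hnonneg : ∀ i, 0 ≤ w i * g i ^ 2 := fun i => mul_nonneg (hw i) (sq_nonneg _)
  refine ⟨fun h => (ENNReal.summable_toReal h).congr fun i => ENNReal.toReal_ofReal (hnonneg i),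
    fun h => ?_⟩
  rw [weightedSqSum, ← ENNReal.ofReal_tsum_of_nonneg hnonneg h]
  exact ENNReal.ofReal_ne_top

theorem toReal_weightedSqSum (hw : ∀ i, 0 ≤ w i) (g : ι → ℝ) :
    (weightedSqSum w g).toReal = ∑' i, w i * g i ^ 2 := by
  rw [weightedSqSum, ENNReal.tsum_toReal_eq fun _ => ENNReal.ofReal_ne_top]
  exact tsum_congr fun i => ENNReal.toReal_ofReal (mul_nonneg (hw i) (sq_nonneg _))

theorem weightedSqSum_mono (hw : ∀ i, 0 ≤ w i) {g h : ι → ℝ} (hgh : ∀ i, |g i| ≤ |h i|) :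
    weightedSqSum w g ≤ weightedSqSum w h :=
  ENNReal.tsum_le_tsum fun i => ENNReal.ofReal_le_ofReal <|
    mul_le_mul_of_nonneg_left (sq_le_sq.2 (hgh i)) (hw i)

theorem weightedSqSum_sub_le (hw : ∀ i, 0 ≤ w i) (g h : ι → ℝ) :
    weightedSqSum w (g - h) ≤ 2 * weightedSqSum w g + 2 * weightedSqSum w h := by
  simp only [weightedSqSum, ← ENNReal.tsum_mul_left, ← ENNReal.tsum_add]
  refine ENNReal.tsum_le_tsum fun i => ?_
  have hg := mul_nonneg (hw i) (sq_nonneg (g i))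
  have hh := mul_nonneg (hw i) (sq_nonneg (h i))
  rw [← ENNReal.ofReal_ofNat 2, ← ENNReal.ofReal_mul zero_le_two, ← ENNReal.ofReal_mul zero_le_two,
    ← ENNReal.ofReal_add (by positivity) (by positivity)]
  refine ENNReal.ofReal_le_ofReal ?_
  have := mul_nonneg (hw i) (sq_nonneg (g i + h i))
  simp only [Pi.sub_apply]
  nlinarith

theorem lowerSemicontinuous_weightedSqSum (w : ι → ℝ) :
    LowerSemicontinuous (weightedSqSum w) :=
  lowerSemicontinuous_tsum fun i =>
    (ENNReal.continuous_ofReal.comp (by fun_prop)).lowerSemicontinuous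

end WeightedSqSum

namespace WeightedGraph

variable {V : Type*} (G : WeightedGraph V)

def grad (u : V → ℝ) : V × V → ℝ := fun p => u p.1 - u p.2

theorem grad_sub (u v : V → ℝ) : grad (u - v) = grad u - grad v := by
  funext p
  simp only [grad, Pi.sub_apply]
  ring

theorem energy_eq (u : V → ℝ) :
    G.energy u = 1 / 2 * weightedSqSum (Function.uncurry G.b) (grad u)
      + weightedSqSum G.c u := rfl

theorem uncurry_b_nonneg (p : V × V) : 0 ≤ Function.uncurry G.b p := G.b_nonneg p.1 p.2

theorem deg_nonneg (x : V) : 0 ≤ G.deg x :=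
  add_nonneg (tsum_nonneg (G.b_nonneg x)) (G.c_nonneg x)

theorem finiteEnergy_iff {u : V → ℝ} : G.FiniteEnergy u ↔
    weightedSqSum (Function.uncurry G.b) (grad u) ≠ ⊤ ∧ weightedSqSum G.c u ≠ ⊤ := by
  simp [FiniteEnergy, energy_eq, lt_top_iff_ne_top, ENNReal.mul_eq_top]

theorem energyBilin_self {u : V → ℝ} (hu : G.FiniteEnergy u) :
    G.energyBilin u u = (G.energy u).toReal := by
  obtain ⟨hgrad, hc⟩ := G.finiteEnergy_iff.1 hu
  rw [energy_eq, ENNReal.toReal_add (ENNReal.mul_ne_top (by simp) hgrad) hc, ENNReal.toReal_mul,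
    toReal_weightedSqSum G.uncurry_b_nonneg, toReal_weightedSqSum G.c_nonneg]
  simp [energyBilin, grad, sq, mul_assoc, Function.uncurry]

theorem energyBilin_comm (u v : V → ℝ) : G.energyBilin u v = G.energyBilin v u := by
  simp only [energyBilin, mul_right_comm]

theorem energy_sub_le (u v : V → ℝ) :
    G.energy (u - v) ≤ 2 * G.energy u + 2 * G.energy v := by
  calc G.energy (u - v)
      ≤ 1 / 2 * (2 * weightedSqSum (Function.uncurry G.b) (grad u)
            + 2 * weightedSqSum (Function.uncurry G.b) (grad v))
          + (2 * weightedSqSum G.c u + 2 * weightedSqSum G.c v) := by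
        rw [energy_eq, grad_sub]
        gcongr
        · exact weightedSqSum_sub_le G.uncurry_b_nonneg _ _
        · exact weightedSqSum_sub_le G.c_nonneg _ _
    _ = 2 * G.energy u + 2 * G.energy v := by
        rw [energy_eq, energy_eq]
        ring

theorem energy_comp_le {C : ℝ → ℝ} (hC0 : C 0 = 0) (hC : ∀ a b, |C a - C b| ≤ |a - b|)
    (u : V → ℝ) : G.energy (C ∘ u) ≤ G.energy u := by
  rw [energy_eq, energy_eq]
  gcongr
  · exact weightedSqSum_mono G.uncurry_b_nonneg fun p => hC _ _
  · exact weightedSqSum_mono G.c_nonneg fun x => by simpa [hC0] using hC (u x) 0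

theorem energyBilin_comp_le {C : ℝ → ℝ} (hC0 : C 0 = 0) (hC : ∀ a b, |C a - C b| ≤ |a - b|)
    {u : V → ℝ} (hu : G.FiniteEnergy u) : G.energyBilin (C ∘ u) (C ∘ u) ≤ G.energyBilin u u := by
  have hle := G.energy_comp_le hC0 hC u
  rw [G.energyBilin_self (hle.trans_lt hu), G.energyBilin_self hu]
  exact ENNReal.toReal_mono hu.ne hle

theorem lowerSemicontinuous_energy : LowerSemicontinuous G.energy := by
  have hgrad : Continuous (grad : (V → ℝ) → V × V → ℝ) :=
    continuous_pi fun p => (continuous_apply p.1).sub (continuous_apply p.2)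
  exact ((ENNReal.continuous_const_mul (by simp)).comp_lowerSemicontinuous
    ((lowerSemicontinuous_weightedSqSum _).comp hgrad) fun _ _ h => by gcongr).add
    (lowerSemicontinuous_weightedSqSum _)

theorem energy_le_two_mul_weightedSqSum_deg (u : V → ℝ) :
    G.energy u ≤ 2 * weightedSqSum G.deg u := by
  set S := weightedSqSum (fun x => ∑' y, G.b x y) u
  have hfst : weightedSqSum (Function.uncurry G.b) (fun p => u p.1) = S := by
    simp only [S, weightedSqSum, ENNReal.tsum_prod', Function.uncurry_apply_pair]
    refine tsum_congr fun x => ?_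
    rw [← ENNReal.ofReal_tsum_of_nonneg (fun y => mul_nonneg (G.b_nonneg x y) (sq_nonneg _))
      ((G.b_summable x).mul_right _), tsum_mul_right]
  have hsnd : weightedSqSum (Function.uncurry G.b) (fun p => u p.2) = S := by
    rw [← hfst, weightedSqSum, ← (Equiv.prodComm V V).tsum_eq]
    simp [weightedSqSum, Function.uncurry, G.b_symm]
  have hdeg : weightedSqSum G.deg u = S + weightedSqSum G.c u := by
    simp only [S, weightedSqSum, ← ENNReal.tsum_add]
    refine tsum_congr fun x => ?_
    rw [← ENNReal.ofReal_add (mul_nonneg (tsum_nonneg (G.b_nonneg x)) (sq_nonneg _))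
      (mul_nonneg (G.c_nonneg x) (sq_nonneg _)), deg, add_mul]
  calc G.energy u
      ≤ 1 / 2 * (2 * S + 2 * S) + weightedSqSum G.c u := by
        have hgrad := weightedSqSum_sub_le G.uncurry_b_nonneg (fun p => u p.1) (fun p => u p.2)
        rw [hfst, hsnd] at hgrad
        rw [energy_eq]
        gcongr
        exact hgrad
    _ = 2 * S + weightedSqSum G.c u := by
        rw [← two_mul, ← mul_assoc, one_div,
          ENNReal.inv_mul_cancel two_ne_zero ENNReal.ofNat_ne_top, one_mul]
    _ ≤ 2 * weightedSqSum G.deg u := by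
        rw [hdeg, mul_add]
        gcongr
        exact le_mul_of_one_le_left' one_le_two

theorem finiteEnergy_of_hasFiniteSupport {u : V → ℝ} (hu : u.HasFiniteSupport) :
    G.FiniteEnergy u := by
  have hsupp : (fun x => G.deg x * u x ^ 2).HasFiniteSupport :=
    hu.subset fun x hx => by simp_all
  refine (G.energy_le_two_mul_weightedSqSum_deg u).trans_lt (ENNReal.mul_lt_top (by simp) ?_)
  exact ((weightedSqSum_ne_top_iff G.deg_nonneg).2 (summable_of_hasFiniteSupport hsupp)).lt_top

end WeightedGraph

section L2

variable {V : Type*} {m : V → ℝ}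

theorem memL2_iff_weightedSqSum_ne_top (hm : ∀ x, 0 ≤ m x) {u : V → ℝ} :
    MemL2 m u ↔ weightedSqSum m u ≠ ⊤ := by
  simp only [weightedSqSum_ne_top_iff hm, MemL2, mul_comm]

theorem memL2_of_hasFiniteSupport {u : V → ℝ} (hu : u.HasFiniteSupport) : MemL2 m u :=
  summable_of_hasFiniteSupport (hu.subset fun x hx => by simp_all)

theorem MemL2.comp_contraction (hm : ∀ x, 0 ≤ m x) {C : ℝ → ℝ} (hC0 : C 0 = 0)
    (hC : ∀ a b, |C a - C b| ≤ |a - b|) {u : V → ℝ} (hu : MemL2 m u) : MemL2 m (C ∘ u) := by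
  rw [memL2_iff_weightedSqSum_ne_top hm] at hu ⊢
  exact ne_top_of_le_ne_top hu (weightedSqSum_mono hm fun x => by simpa [hC0] using hC (u x) 0)

theorem exists_hasFiniteSupport_tsum_sub_sq_mul_lt (f : V → ℝ) {ε : ℝ} (hε : 0 < ε) :
    ∃ u : V → ℝ, u.HasFiniteSupport ∧ ∑' x, (f x - u x) ^ 2 * m x < ε := by
  obtain ⟨s, hs⟩ :=
    ((tendsto_tsum_compl_atTop_zero fun x => f x ^ 2 * m x).eventually_lt_const hε).exists
  refine ⟨Set.indicator s f, s.finite_toSet.subset Set.support_indicator_subset, ?_⟩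
  have hcompl : ∀ x, (f x - Set.indicator s f x) ^ 2 * m x
      = Set.indicator (↑s)ᶜ (fun y => f y ^ 2 * m y) x := by
    intro x
    by_cases hx : x ∈ s <;> simp [hx]
  rw [tsum_congr hcompl, ← tsum_subtype]
  exact hs

end L2

namespace WeightedGraph

variable {V : Type*} (G : WeightedGraph V) {m : V → ℝ}

noncomputable def formNormSq (m u : V → ℝ) : ℝ≥0∞ := G.energy u + weightedSqSum m u

theorem formNormSq_lt_top_iff (hm : ∀ x, 0 ≤ m x) {u : V → ℝ} :
    G.formNormSq m u < ⊤ ↔ G.FiniteEnergy u ∧ MemL2 m u := by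
  simp only [formNormSq, FiniteEnergy, memL2_iff_weightedSqSum_ne_top hm, lt_top_iff_ne_top,
    ENNReal.add_ne_top]

theorem toReal_formNormSq (hm : ∀ x, 0 ≤ m x) {u : V → ℝ} (hu : G.formNormSq m u < ⊤) :
    (G.formNormSq m u).toReal = (G.energy u).toReal + ∑' x, u x ^ 2 * m x := by
  obtain ⟨hE, hL2⟩ := (G.formNormSq_lt_top_iff hm).1 hu
  rw [formNormSq, ENNReal.toReal_add hE.ne ((memL2_iff_weightedSqSum_ne_top hm).1 hL2),
    toReal_weightedSqSum hm]
  simp only [mul_comm]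

theorem formNormSq_sub_le (hm : ∀ x, 0 ≤ m x) (u v : V → ℝ) :
    G.formNormSq m (u - v) ≤ 2 * G.formNormSq m u + 2 * G.formNormSq m v :=
  calc G.formNormSq m (u - v)
      ≤ (2 * G.energy u + 2 * G.energy v) + (2 * weightedSqSum m u + 2 * weightedSqSum m v) :=
        add_le_add (G.energy_sub_le u v) (weightedSqSum_sub_le hm u v)
    _ = 2 * G.formNormSq m u + 2 * G.formNormSq m v := by
        simp only [formNormSq]
        ring

theorem formNormSq_sub_lt_top (hm : ∀ x, 0 ≤ m x) {u v : V → ℝ} (hu : G.formNormSq m u < ⊤)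
    (hv : G.formNormSq m v < ⊤) : G.formNormSq m (u - v) < ⊤ :=
  (G.formNormSq_sub_le hm u v).trans_lt <| ENNReal.add_lt_top.2
    ⟨ENNReal.mul_lt_top (by simp) hu, ENNReal.mul_lt_top (by simp) hv⟩

theorem lowerSemicontinuous_formNormSq (m : V → ℝ) : LowerSemicontinuous (G.formNormSq m) :=
  G.lowerSemicontinuous_energy.add (lowerSemicontinuous_weightedSqSum m)

theorem cauchySeq_apply_of_formNormSq (hm : ∀ x, 0 < m x) {f : ℕ → V → ℝ}
    (hf : ∀ ε > 0, ∃ N, ∀ p ≥ N, ∀ q ≥ N, G.formNormSq m (f p - f q) ≤ ε) (x : V) :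
    CauchySeq fun n => f n x := by
  refine Metric.cauchySeq_iff.2 fun δ hδ => ?_
  obtain ⟨N, hN⟩ := hf (ENNReal.ofReal (m x * (δ / 2) ^ 2)) (by simp [hm x, hδ])
  refine ⟨N, fun p hp q hq => ?_⟩
  have hpoint : ENNReal.ofReal (m x * (f p x - f q x) ^ 2) ≤ G.formNormSq m (f p - f q) :=
    (ENNReal.le_tsum x).trans le_add_self
  have hsq : (f p x - f q x) ^ 2 ≤ (δ / 2) ^ 2 := by
    have h := hpoint.trans (hN p hp q hq)
    rw [ENNReal.ofReal_le_ofReal_iff (mul_nonneg (hm x).le (sq_nonneg _))] at h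
    exact le_of_mul_le_mul_left h (hm x)
  rw [Real.dist_eq]
  calc |f p x - f q x| ≤ |δ / 2| := sq_le_sq.1 hsq
    _ < δ := by rw [abs_of_pos (half_pos hδ)]; exact half_lt_self hδ

theorem exists_tendsto_formNormSq_of_cauchy (hm : ∀ x, 0 < m x) {f : ℕ → V → ℝ}
    (hf : ∀ ε > 0, ∃ N, ∀ p ≥ N, ∀ q ≥ N, G.formNormSq m (f p - f q) ≤ ε) :
    ∃ u, Tendsto (fun n => G.formNormSq m (f n - u)) atTop (𝓝 0) := by
  choose u hu using fun x =>
    cauchySeq_tendsto_of_complete (G.cauchySeq_apply_of_formNormSq hm hf x)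
  have hfu : Tendsto f atTop (𝓝 u) := tendsto_pi_nhds.2 hu
  refine ⟨u, ENNReal.tendsto_nhds_zero.2 fun ε hε => ?_⟩
  obtain ⟨N, hN⟩ := hf ε hε
  refine eventually_atTop.2 ⟨N, fun n hn => ?_⟩
  have hlsc : LowerSemicontinuous fun v => G.formNormSq m (f n - v) :=
    (G.lowerSemicontinuous_formNormSq m).comp (continuous_const.sub continuous_id)
  exact (hlsc.isClosed_preimage ε).mem_of_tendsto hfu (eventually_atTop.2 ⟨N, hN n hn⟩)

theorem exists_tendsto_of_cauchy (hm : ∀ x, 0 < m x) {f : ℕ → V → ℝ}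
    (hdom : ∀ n, G.FiniteEnergy (f n) ∧ MemL2 m (f n))
    (hf : ∀ ε > (0 : ℝ), ∃ N, ∀ p ≥ N, ∀ q ≥ N,
      (G.energy (f p - f q)).toReal + ∑' x, (f p x - f q x) ^ 2 * m x < ε) :
    ∃ u : V → ℝ, (G.FiniteEnergy u ∧ MemL2 m u) ∧
      Tendsto (fun n => (G.energy (f n - u)).toReal + ∑' x, (f n x - u x) ^ 2 * m x)
        atTop (𝓝 0) := by
  have hm0 : ∀ x, 0 ≤ m x := fun x => (hm x).le
  have hfin : ∀ n, G.formNormSq m (f n) < ⊤ := fun n => (G.formNormSq_lt_top_iff hm0).2 (hdom n)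
  have hf' : ∀ ε > 0, ∃ N, ∀ p ≥ N, ∀ q ≥ N, G.formNormSq m (f p - f q) ≤ ε := by
    intro ε hε
    obtain ⟨r, -, hr, hrε⟩ := ENNReal.lt_iff_exists_real_btwn.1 hε
    obtain ⟨N, hN⟩ := hf r (ENNReal.ofReal_pos.1 hr)
    refine ⟨N, fun p hp q hq => ?_⟩
    have hpq := G.formNormSq_sub_lt_top hm0 (hfin p) (hfin q)
    rw [← ENNReal.ofReal_toReal hpq.ne, G.toReal_formNormSq hm0 hpq]
    exact (ENNReal.ofReal_le_ofReal (hN p hp q hq).le).trans hrε.le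
  obtain ⟨u, hu⟩ := G.exists_tendsto_formNormSq_of_cauchy hm hf'
  obtain ⟨N, hN⟩ := (hu.eventually (gt_mem_nhds zero_lt_one)).exists
  have hfinu : G.formNormSq m u < ⊤ := by
    simpa using G.formNormSq_sub_lt_top hm0 (hfin N) (hN.trans ENNReal.one_lt_top)
  refine ⟨u, (G.formNormSq_lt_top_iff hm0).1 hfinu, ?_⟩
  rw [← ENNReal.toReal_zero]
  exact ((ENNReal.tendsto_toReal ENNReal.zero_ne_top).comp hu).congr fun n =>
    G.toReal_formNormSq hm0 (G.formNormSq_sub_lt_top hm0 (hfin n) hfinu)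

end WeightedGraph

theorem neumann_form_is_dirichlet_general {V : Type*} (G : WeightedGraph V)
    (m : V → ℝ) (hm : ∀ x, 0 < m x) :
    -- nonnegative
    (∀ u : V → ℝ, G.FiniteEnergy u ∧ MemL2 m u → 0 ≤ G.energyBilin u u) ∧
    -- symmetric
    (∀ u v : V → ℝ, G.FiniteEnergy u ∧ MemL2 m u → G.FiniteEnergy v ∧ MemL2 m v →
      G.energyBilin u v = G.energyBilin v u) ∧
    -- densely defined in ℓ²(V,m)
    (∀ f : V → ℝ, MemL2 m f → ∀ ε > (0 : ℝ),
      ∃ u : V → ℝ, (G.FiniteEnergy u ∧ MemL2 m u) ∧ ∑' x, (f x - u x) ^ 2 * m x < ε) ∧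
    -- closed: Cauchy sequences in the form norm converge in the form norm within the domain
    (∀ f : ℕ → V → ℝ, (∀ n, G.FiniteEnergy (f n) ∧ MemL2 m (f n)) →
      (∀ ε > (0 : ℝ), ∃ N, ∀ p ≥ N, ∀ q ≥ N,
        (G.energy (fun x => f p x - f q x)).toReal + ∑' x, (f p x - f q x) ^ 2 * m x < ε) →
      ∃ u : V → ℝ, (G.FiniteEnergy u ∧ MemL2 m u) ∧
        Filter.Tendsto
          (fun n => (G.energy (fun x => f n x - u x)).toReal + ∑' x, (f n x - u x) ^ 2 * m x)
          Filter.atTop (nhds 0)) ∧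
    -- Markov property
    (∀ C : ℝ → ℝ, C 0 = 0 → (∀ a b : ℝ, |C a - C b| ≤ |a - b|) →
      ∀ u : V → ℝ, G.FiniteEnergy u ∧ MemL2 m u →
        (G.FiniteEnergy (fun x => C (u x)) ∧ MemL2 m (fun x => C (u x))) ∧
          G.energyBilin (fun x => C (u x)) (fun x => C (u x)) ≤ G.energyBilin u u) := by
  refine ⟨fun u hu => ?_, fun u v _ _ => G.energyBilin_comm u v, fun f _ ε hε => ?_,
    fun f hdom hf => G.exists_tendsto_of_cauchy hm hdom hf, fun C hC0 hC u hu => ?_⟩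
  · rw [G.energyBilin_self hu.1]
    exact ENNReal.toReal_nonneg
  · obtain ⟨u, hu, hfu⟩ := exists_hasFiniteSupport_tsum_sub_sq_mul_lt (m := m) f hε
    exact ⟨u, ⟨G.finiteEnergy_of_hasFiniteSupport hu, memL2_of_hasFiniteSupport hu⟩, hfu⟩
  · exact ⟨⟨(G.energy_comp_le hC0 hC u).trans_lt hu.1,
      hu.2.comp_contraction (fun x => (hm x).le) hC0 hC⟩, G.energyBilin_comp_le hC0 hC hu.1⟩

/-- the Neumann form `Q^(N)` on `D(Q^(N)) = D̃ ∩ ℓ²(V,m)` is a Dirichlet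
form: nonnegative, symmetric, densely defined, closed, and Markovian. -/
theorem neumann_form_is_dirichlet {V : Type*} [Countable V] (G : WeightedGraph V)
    (m : V → ℝ) (hm : ∀ x, 0 < m x) :
    -- nonnegative
    (∀ u : V → ℝ, G.FiniteEnergy u ∧ MemL2 m u → 0 ≤ G.energyBilin u u) ∧
    -- symmetric
    (∀ u v : V → ℝ, G.FiniteEnergy u ∧ MemL2 m u → G.FiniteEnergy v ∧ MemL2 m v →
      G.energyBilin u v = G.energyBilin v u) ∧
    -- densely defined in ℓ²(V,m)
    (∀ f : V → ℝ, MemL2 m f → ∀ ε > (0 : ℝ),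
      ∃ u : V → ℝ, (G.FiniteEnergy u ∧ MemL2 m u) ∧ ∑' x, (f x - u x) ^ 2 * m x < ε) ∧
    -- closed: Cauchy sequences in the form norm converge in the form norm within the domain
    (∀ f : ℕ → V → ℝ, (∀ n, G.FiniteEnergy (f n) ∧ MemL2 m (f n)) →
      (∀ ε > (0 : ℝ), ∃ N, ∀ p ≥ N, ∀ q ≥ N,
        (G.energy (fun x => f p x - f q x)).toReal + ∑' x, (f p x - f q x) ^ 2 * m x < ε) →
      ∃ u : V → ℝ, (G.FiniteEnergy u ∧ MemL2 m u) ∧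
        Filter.Tendsto
          (fun n => (G.energy (fun x => f n x - u x)).toReal + ∑' x, (f n x - u x) ^ 2 * m x)
          Filter.atTop (nhds 0)) ∧
    -- Markov property
    (∀ C : ℝ → ℝ, C 0 = 0 → (∀ a b : ℝ, |C a - C b| ≤ |a - b|) →
      ∀ u : V → ℝ, G.FiniteEnergy u ∧ MemL2 m u →
        (G.FiniteEnergy (fun x => C (u x)) ∧ MemL2 m (fun x => C (u x))) ∧
          G.energyBilin (fun x => C (u x)) (fun x => C (u x)) ≤ G.energyBilin u u) :=
  neumann_form_is_dirichlet_general G m hm
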